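/- In a commutative idempotent involutive residuated lattice, for all x, y: 0_x · 0_y = 0_{x·y} and 1_x · 1_y = 1_{x·y}. -/

import Mathlib

/-- A commutative idempotent involutive residuated lattice. -/
class CIdInRL (α : Type*) extends Lattice α, CommMonoid α, Zero α where
  arrow : α → α → α
  residuation : ∀ x y z : α, x * y ≤ z ↔ y ≤ arrow x z
  idem : ∀ x : α, x * x = x
  involutive : ∀ x : α, arrow (arrow x 0) 0 = x

namespace CIdInRL
variable {α : Type*} [CIdInRL α]
/-- linear negation ¬x := x → 0 -/
def neg (x : α) : α := arrow x 0
/-- 0_x := x ∧ ¬x -/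
def zx (x : α) : α := x ⊓ neg x
/-- 1_x := x ∨ ¬x -/
def ox (x : α) : α := x ⊔ neg x
/-- monoidal order x ⊑ y iff x·y = x -/
def mleq (x y : α) : Prop := x * y = x
end CIdInRL


/-!
Negation `¬` is an order-reversing involution with `¬1 = 0`, and `0 ≤ 1`. Hence `0_x ≤ 0 ≤ 1` and
`1_x = ¬0_x ≥ 1`. Below `1` an idempotent monotone multiplication is the meet, above `1` it is the
join, so the claim becomes `0_{xy} = 0_x ∧ 0_y`, whose dual under `¬` is `1_{xy} = 1_x ∨ 1_y`.
The key identity `0_x = x · ¬x` makes `0_{xy}` absorb factors of `xy`.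
-/

namespace CIdInRL

variable {α : Type*} [CIdInRL α]

instance : IsOrderedMonoid α where
  mul_le_mul_left a b hab c := by
    rw [mul_comm a, mul_comm b]
    exact (residuation c a (c * b)).mpr (hab.trans ((residuation c b (c * b)).mp le_rfl))

theorem le_neg_iff {a b : α} : a ≤ neg b ↔ b * a ≤ 0 :=
  (residuation b a 0).symm

theorem mul_neg_self_le_zero (a : α) : a * neg a ≤ 0 :=
  le_neg_iff.mp le_rfl

theorem neg_neg (a : α) : neg (neg a) = a :=
  involutive a

theorem neg_le_neg {a b : α} (h : a ≤ b) : neg b ≤ neg a :=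
  le_neg_iff.mpr ((mul_le_mul_left h _).trans (mul_neg_self_le_zero b))

theorem neg_le_neg_iff {a b : α} : neg a ≤ neg b ↔ b ≤ a :=
  ⟨fun h ↦ by simpa only [neg_neg] using neg_le_neg h, neg_le_neg⟩

def negOrderIso : α ≃o αᵒᵈ where
  toFun a := OrderDual.toDual (neg a)
  invFun a := neg (OrderDual.ofDual a)
  left_inv := neg_neg
  right_inv a := neg_neg (OrderDual.ofDual a)
  map_rel_iff' := neg_le_neg_iff

theorem neg_inf (a b : α) : neg (a ⊓ b) = neg a ⊔ neg b :=
  negOrderIso.map_inf a b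

theorem neg_one : neg (1 : α) = 0 :=
  le_antisymm (by simpa only [one_mul] using mul_neg_self_le_zero (1 : α))
    (le_neg_iff.mpr (one_mul 0).le)

instance : ZeroLEOneClass α where
  zero_le_one := by
    rw [← neg_neg 1, neg_one]
    exact le_neg_iff.mpr (idem 0).le

theorem mleq.le_of_le_one {a b : α} (h : mleq a b) (ha : a ≤ 1) : a ≤ b :=
  calc a = a * b := h.symm
    _ ≤ 1 * b := mul_le_mul_left ha b
    _ = b := one_mul b

theorem mul_mleq_left (a b : α) : mleq (a * b) a := by
  rw [mleq, mul_right_comm, idem]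

theorem mul_mleq_right (a b : α) : mleq (a * b) b := by
  rw [mleq, mul_assoc, idem]

theorem mul_eq_inf_of_le_one {a b : α} (ha : a ≤ 1) (hb : b ≤ 1) : a * b = a ⊓ b := by
  refine le_antisymm (le_inf ?_ ?_) ?_
  · simpa only [mul_one] using mul_le_mul_right hb a
  · simpa only [one_mul] using mul_le_mul_left ha b
  · calc a ⊓ b = (a ⊓ b) * (a ⊓ b) := (idem _).symm
      _ ≤ a * b := mul_le_mul' inf_le_left inf_le_right

theorem mul_eq_sup_of_one_le {a b : α} (ha : 1 ≤ a) (hb : 1 ≤ b) : a * b = a ⊔ b := by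
  refine le_antisymm ?_ (sup_le ?_ ?_)
  · calc a * b ≤ (a ⊔ b) * (a ⊔ b) := mul_le_mul' le_sup_left le_sup_right
      _ = a ⊔ b := idem _
  · simpa only [mul_one] using mul_le_mul_right hb a
  · simpa only [one_mul] using mul_le_mul_left ha b

theorem zx_eq_mul_neg (a : α) : zx a = a * neg a := by
  have h : a * neg a ≤ 1 := (mul_neg_self_le_zero a).trans zero_le_one
  refine le_antisymm ?_ (le_inf ((mul_mleq_left _ _).le_of_le_one h)
    ((mul_mleq_right _ _).le_of_le_one h))
  calc zx a = zx a * zx a := (idem _).symm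
    _ ≤ a * neg a := mul_le_mul' inf_le_left inf_le_right

theorem zx_le_zero (a : α) : zx a ≤ 0 :=
  (zx_eq_mul_neg a).trans_le (mul_neg_self_le_zero a)

theorem zx_le_one (a : α) : zx a ≤ 1 :=
  (zx_le_zero a).trans zero_le_one

theorem neg_zx (a : α) : neg (zx a) = ox a := by
  rw [zx, neg_inf, neg_neg, ox, sup_comm]

theorem one_le_ox (a : α) : 1 ≤ ox a := by
  rw [← neg_zx, le_neg_iff, mul_one]
  exact zx_le_zero a

theorem mul_zx_le_zero (a : α) : a * zx a ≤ 0 :=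
  (mul_le_mul_right inf_le_right a).trans (mul_neg_self_le_zero a)

theorem zx_mul_le_left (x y : α) : zx (x * y) ≤ zx x := by
  refine le_inf ?_ (le_neg_iff.mpr ?_)
  · have h := zx_le_one (x * y)
    rw [zx_eq_mul_neg, mul_assoc] at h ⊢
    exact (mul_mleq_left _ _).le_of_le_one h
  · rw [zx_eq_mul_neg, ← mul_assoc, ← mul_assoc, idem, ← zx_eq_mul_neg]
    exact zx_le_zero _

theorem zx_mul (x y : α) : zx (x * y) = zx x ⊓ zx y := by
  refine le_antisymm (le_inf (zx_mul_le_left x y) (mul_comm x y ▸ zx_mul_le_left y x)) ?_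
  rw [← mul_eq_inf_of_le_one (zx_le_one x) (zx_le_one y)]
  refine le_inf (mul_le_mul' inf_le_left inf_le_left) (le_neg_iff.mpr ?_)
  calc x * y * (zx x * zx y) = (x * zx x) * (y * zx y) := mul_mul_mul_comm _ _ _ _
    _ ≤ 0 * 0 := mul_le_mul' (mul_zx_le_zero x) (mul_zx_le_zero y)
    _ = 0 := idem 0

theorem ox_mul (x y : α) : ox (x * y) = ox x ⊔ ox y := by
  rw [← neg_zx, zx_mul, neg_inf, neg_zx, neg_zx]

end CIdInRL

open CIdInRL in
theorem stmt10 {α : Type*} [CIdInRL α] (x y : α) :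
    zx x * zx y = zx (x * y) ∧ ox x * ox y = ox (x * y) :=
  ⟨by rw [mul_eq_inf_of_le_one (zx_le_one x) (zx_le_one y), zx_mul],
    by rw [mul_eq_sup_of_one_le (one_le_ox x) (one_le_ox y), ox_mul]⟩
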